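/- Let 0<s<1 and s≤β<2s, and suppose f:[0,π]→ℝ is a C² function satisfying f'(θ) = (1/sin θ)[(f(θ)-(β-s)cos θ)² + (β-s)² sin² θ - s²] on (0,π), with f(0)=β, f(π)=2s-β>0, f'(0)=f'(π)=0. Then there exists C>0 such that f(θ) ≥ C for all θ∈[0,π]. -/

import Mathlib

/-!
Let `a = β - s`, so `0 ≤ a < s`. Take the last point `θ₁` at which `f` attains its minimum and
suppose `f θ₁ ≤ 0`. The boundary values are positive, so `θ₁` is interior and `f' θ₁ = 0`; the
equation then forces `f θ₁ = φ θ₁`, where `φ θ = a cos θ - √(s² - a² sin² θ)` is the negative root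
of its right-hand side. Since `φ' = a sin θ · φ / √(s² - a² sin² θ) ≤ 0`, just to the right of `θ₁`
we have `φ θ ≤ φ θ₁ = f θ₁ < f θ`, while `f` is still below the positive root. There the
right-hand side is negative, so `f` drops below its minimum: a contradiction.
-/

open Real Set Filter Topology

theorem IsCompact.exists_isMinOn_lt_of_lt {α β : Type*} [LinearOrder α] [TopologicalSpace α]
    [OrderClosedTopology α] [LinearOrder β] [TopologicalSpace β] [OrderClosedTopology β]
    {s : Set α} (hs : IsCompact s) (hne : s.Nonempty) {f : α → β} (hf : ContinuousOn f s) :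
    ∃ x ∈ s, IsMinOn f s x ∧ ∀ y ∈ s, x < y → f x < f y := by
  obtain ⟨x₀, hx₀, hmin⟩ := hs.exists_isMinOn hne hf
  have hclosed : IsClosed (s ∩ f ⁻¹' {f x₀}) :=
    hf.preimage_isClosed_of_isClosed hs.isClosed isClosed_singleton
  obtain ⟨x, ⟨hx, hfx⟩, hgreatest⟩ :=
    (hs.of_isClosed_subset hclosed inter_subset_left).exists_isGreatest ⟨x₀, hx₀, rfl⟩
  refine ⟨x, hx, fun y hy => hfx ▸ hmin hy, fun y hy hxy => ?_⟩
  refine (hfx ▸ hmin hy : f x ≤ f y).lt_of_ne fun hxy' => hxy.not_ge (hgreatest ⟨hy, ?_⟩)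
  exact hxy'.symm.trans hfx

theorem exists_lt_right_of_deriv_neg {f g : ℝ → ℝ} {a c : ℝ} (hac : a < c)
    (hf : ContinuousOn f (Icc a c)) (hg : ContinuousAt g a) (hfg : f a < g a)
    (hneg : ∀ x ∈ Ioo a c, f x < g x → deriv f x < 0) :
    ∃ b ∈ Ioo a c, f b < f a := by
  have hnear : ∀ᶠ x in 𝓝[>] a, f x < g x ∧ x < c := by
    have hfa : ContinuousWithinAt f (Ioi a) a :=
      (hf a (left_mem_Icc.2 hac.le)).mono_of_mem_nhdsWithin (Icc_mem_nhdsGT hac)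
    exact (hfa.eventually_lt hg.continuousWithinAt hfg).and
      (nhdsWithin_le_nhds (Iio_mem_nhds hac))
  obtain ⟨u, hu, hsub⟩ := mem_nhdsGT_iff_exists_Ioo_subset.1 hnear
  set b := (a + u) / 2
  have hb : b ∈ Ioo a u := ⟨left_lt_add_div_two.2 hu, add_div_two_lt_right.2 hu⟩
  have hanti : StrictAntiOn f (Icc a b) := by
    refine strictAntiOn_of_deriv_neg (convex_Icc a b)
      (hf.mono (Icc_subset_Icc_right (hsub hb).2.le)) fun x hx => ?_
    rw [interior_Icc] at hx
    have hxu : x ∈ Ioo a u := ⟨hx.1, hx.2.trans hb.2⟩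
    exact hneg x ⟨hx.1, (hsub hxu).2⟩ (hsub hxu).1
  exact ⟨b, ⟨hb.1, (hsub hb).2⟩, hanti (left_mem_Icc.2 hb.1.le) (right_mem_Icc.2 hb.1.le) hb.1⟩

noncomputable section

def riccatiRhs (a s θ x : ℝ) : ℝ :=
  1 / sin θ * ((x - a * cos θ) ^ 2 + a ^ 2 * sin θ ^ 2 - s ^ 2)

def riccatiLower (a s θ : ℝ) : ℝ := a * cos θ - √(s ^ 2 - a ^ 2 * sin θ ^ 2)

def riccatiUpper (a s θ : ℝ) : ℝ := a * cos θ + √(s ^ 2 - a ^ 2 * sin θ ^ 2)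

end

section Riccati

variable {a s : ℝ}

theorem sq_mul_sin_sq_lt (has : |a| < s) (θ : ℝ) : a ^ 2 * sin θ ^ 2 < s ^ 2 := by
  have := sq_lt_sq' (neg_lt_of_abs_lt has) (lt_of_abs_lt has)
  nlinarith [sin_sq_le_one θ, sq_nonneg a]

theorem abs_mul_cos_lt_sqrt (has : |a| < s) (θ : ℝ) :
    |a * cos θ| < √(s ^ 2 - a ^ 2 * sin θ ^ 2) := by
  rw [lt_sqrt (abs_nonneg _), sq_abs, mul_pow, cos_sq']
  nlinarith [sq_lt_sq' (neg_lt_of_abs_lt has) (lt_of_abs_lt has)]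

theorem riccatiLower_neg (has : |a| < s) (θ : ℝ) : riccatiLower a s θ < 0 := by
  have := abs_mul_cos_lt_sqrt has θ
  have := le_abs_self (a * cos θ)
  unfold riccatiLower
  linarith

theorem riccatiUpper_pos (has : |a| < s) (θ : ℝ) : 0 < riccatiUpper a s θ := by
  have := abs_mul_cos_lt_sqrt has θ
  have := neg_abs_le (a * cos θ)
  unfold riccatiUpper
  linarith

theorem continuous_riccatiUpper : Continuous (riccatiUpper a s) := by
  unfold riccatiUpper
  fun_prop

theorem riccatiRhs_eq_mul (has : |a| < s) (θ x : ℝ) :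
    riccatiRhs a s θ x = 1 / sin θ * ((x - riccatiLower a s θ) * (x - riccatiUpper a s θ)) := by
  have hsq := sq_sqrt (sub_nonneg.2 (sq_mul_sin_sq_lt has θ).le)
  unfold riccatiRhs riccatiLower riccatiUpper
  linear_combination (1 / sin θ) * hsq

theorem eq_riccatiLower_of_riccatiRhs_eq_zero (has : |a| < s) {θ x : ℝ} (hθ : sin θ ≠ 0)
    (hx : x ≤ 0) (h : riccatiRhs a s θ x = 0) : x = riccatiLower a s θ := by
  rw [riccatiRhs_eq_mul has, mul_eq_zero, mul_eq_zero, sub_eq_zero, sub_eq_zero] at h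
  rcases h with h | h | h
  · simp [hθ] at h
  · exact h
  · exact absurd (h ▸ riccatiUpper_pos has θ) hx.not_gt

theorem riccatiRhs_neg (has : |a| < s) {θ x : ℝ} (hθ : 0 < sin θ)
    (hlow : riccatiLower a s θ < x) (hup : x < riccatiUpper a s θ) : riccatiRhs a s θ x < 0 := by
  rw [riccatiRhs_eq_mul has]
  exact mul_neg_of_pos_of_neg (by positivity) (mul_neg_of_pos_of_neg (by linarith) (by linarith))

theorem hasDerivAt_riccatiLower (has : |a| < s) (θ : ℝ) :
    HasDerivAt (riccatiLower a s)
      (a * sin θ * riccatiLower a s θ / √(s ^ 2 - a ^ 2 * sin θ ^ 2)) θ := by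
  have hψ : 0 < s ^ 2 - a ^ 2 * sin θ ^ 2 := sub_pos.2 (sq_mul_sin_sq_lt has θ)
  refine (((hasDerivAt_cos θ).const_mul a).sub
    ((((hasDerivAt_sin θ).fun_pow 2).const_mul (a ^ 2)).const_sub (s ^ 2) |>.sqrt hψ.ne')
    ).congr_deriv ?_
  unfold riccatiLower
  field_simp
  ring

theorem riccatiLower_antitoneOn (ha : 0 ≤ a) (has : a < s) :
    AntitoneOn (riccatiLower a s) (Icc 0 π) := by
  have has' : |a| < s := by rwa [abs_of_nonneg ha]
  have hderiv := hasDerivAt_riccatiLower has'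
  refine antitoneOn_of_deriv_nonpos (convex_Icc 0 π)
    (HasDerivAt.continuousOn fun θ _ => hderiv θ)
    (fun θ _ => (hderiv θ).differentiableAt.differentiableWithinAt) fun θ hθ => ?_
  rw [interior_Icc] at hθ
  rw [(hderiv θ).deriv]
  have := sin_pos_of_pos_of_lt_pi hθ.1 hθ.2
  exact div_nonpos_of_nonpos_of_nonneg
    (mul_nonpos_of_nonneg_of_nonpos (by positivity) (riccatiLower_neg has' θ).le) (sqrt_nonneg _)

end Riccati

theorem riccati_solution_positive_general (s β : ℝ) (f : ℝ → ℝ)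
    (hsβ : s ≤ β) (hβs : β < 2 * s)
    (hf : ContDiffOn ℝ 2 f (Icc 0 π))
    (hode : ∀ θ ∈ Ioo (0:ℝ) π,
      deriv f θ = (1 / Real.sin θ) *
        ((f θ - (β - s) * Real.cos θ) ^ 2 + (β - s) ^ 2 * Real.sin θ ^ 2 - s ^ 2))
    (hf0 : f 0 = β) (hfπ : f π = 2 * s - β) :
    ∃ C > 0, ∀ θ ∈ Icc (0:ℝ) π, C ≤ f θ := by
  have ha : 0 ≤ β - s := by linarith
  have has : |β - s| < s := by rw [abs_of_nonneg ha]; linarith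
  have hsin : ∀ θ ∈ Ioo 0 π, 0 < sin θ := fun θ hθ => sin_pos_of_pos_of_lt_pi hθ.1 hθ.2
  have hcont : ContinuousOn f (Icc 0 π) := hf.continuousOn
  obtain ⟨θ₁, hθ₁, hmin, hlast⟩ :=
    isCompact_Icc.exists_isMinOn_lt_of_lt ⟨0, left_mem_Icc.2 pi_pos.le⟩ hcont
  refine ⟨f θ₁, lt_of_not_ge fun hle => ?_, fun θ hθ => hmin hθ⟩
  have hθ₁' : θ₁ ∈ Ioo 0 π := by
    refine ⟨hθ₁.1.lt_of_ne ?_, hθ₁.2.lt_of_ne ?_⟩ <;> rintro rfl <;> linarith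
  have hcrit : deriv f θ₁ = 0 := (hmin.isLocalMin (Icc_mem_nhds hθ₁'.1 hθ₁'.2)).deriv_eq_zero
  have hroot : f θ₁ = riccatiLower (β - s) s θ₁ :=
    eq_riccatiLower_of_riccatiRhs_eq_zero has (hsin θ₁ hθ₁').ne' hle (hcrit ▸ hode θ₁ hθ₁').symm
  obtain ⟨b, hb, hdrop⟩ := exists_lt_right_of_deriv_neg hθ₁'.2
    (hcont.mono (Icc_subset_Icc_left hθ₁.1)) continuous_riccatiUpper.continuousAt
    (hle.trans_lt (riccatiUpper_pos has θ₁)) fun θ hθ hup => by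
      have hθ' : θ ∈ Ioo 0 π := ⟨hθ₁'.1.trans hθ.1, hθ.2⟩
      have hlow : riccatiLower (β - s) s θ < f θ :=
        calc riccatiLower (β - s) s θ ≤ riccatiLower (β - s) s θ₁ :=
              riccatiLower_antitoneOn ha (lt_of_abs_lt has) hθ₁ (Ioo_subset_Icc_self hθ') hθ.1.le
          _ = f θ₁ := hroot.symm
          _ < f θ := hlast θ (Ioo_subset_Icc_self hθ') hθ.1
      rw [hode θ hθ']
      exact riccatiRhs_neg has (hsin θ hθ') hlow hup
  exact hdrop.not_ge (hmin (Ioo_subset_Icc_self ⟨hθ₁'.1.trans hb.1, hb.2⟩))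

/-- Positivity of `f`: if `f` is C² on `[0,π]`, solves the Riccati equation
`f' = (1/sin θ)[(f-(β-s)cos θ)² + (β-s)² sin²θ - s²]` on `(0,π)` with
`f(0) = β`, `f(π) = 2s - β > 0` and `f'(0) = f'(π) = 0`, then `f` is bounded below
by a positive constant on `[0,π]`. -/
theorem riccati_solution_positive (s β : ℝ) (f : ℝ → ℝ)
    (hs : 0 < s) (hs1 : s < 1) (hsβ : s ≤ β) (hβs : β < 2 * s)
    (hf : ContDiffOn ℝ 2 f (Icc 0 π))
    (hode : ∀ θ ∈ Ioo (0:ℝ) π,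
      deriv f θ = (1 / Real.sin θ) *
        ((f θ - (β - s) * Real.cos θ) ^ 2 + (β - s) ^ 2 * Real.sin θ ^ 2 - s ^ 2))
    (hf0 : f 0 = β) (hfπ : f π = 2 * s - β) (hpos : 0 < 2 * s - β)
    (hf'0 : deriv f 0 = 0) (hf'π : deriv f π = 0) :
    ∃ C > 0, ∀ θ ∈ Icc (0:ℝ) π, C ≤ f θ :=
  riccati_solution_positive_general s β f hsβ hβs hf hode hf0 hfπ
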